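/- Let V and W be varieties of Ω-algebras of the same type without nullary operation symbols, let Σ be an equational base of V, and let U be the variety defined by Σ^p. Then for every set X, the free U-algebra XU over X belongs to the Mal'tsev product V ∘ W. -/

import Mathlib

structure Signature where
  symbols : Type
  arity : symbols → ℕ

structure Alg (S : Signature) where
  carrier : Type
  op : ∀ ω : S.symbols, (Fin (S.arity ω) → carrier) → carrier
  nonempty : Nonempty carrier

inductive Term (S : Signature) (X : Type) : Type
  | var : X → Term S X
  | app : ∀ ω : S.symbols, (Fin (S.arity ω) → Term S X) → Term S X

def Term.eval {S : Signature} {X : Type} (A : Alg S) (env : X → A.carrier) :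
    Term S X → A.carrier
  | .var x => env x
  | .app ω ts => A.op ω fun i => (ts i).eval A env

/-- The algebra `A` satisfies the identity `u = v`. -/
def Alg.sat {S : Signature} (A : Alg S) {X : Type} (u v : Term S X) : Prop :=
  ∀ env : X → A.carrier, u.eval A env = v.eval A env

/-- An identity: a pair of terms in the countably many variables `x₀, x₁, …`. -/
abbrev Ident (S : Signature) := Term S ℕ × Term S ℕ

/-- `A` lies in the variety axiomatized by the set of identities `E`. -/
def Alg.Models {S : Signature} (A : Alg S) (E : Set (Ident S)) : Prop :=
  ∀ e ∈ E, A.sat e.1 e.2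

/-- The identity `u = v` holds in the variety axiomatized by `E`. -/
def Conseq {S : Signature} (E : Set (Ident S)) {X : Type} (u v : Term S X) : Prop :=
  ∀ A : Alg S, A.Models E → A.sat u v

/-- `a` is an idempotent element of `A`. -/
def Alg.IsIdem {S : Signature} (A : Alg S) (a : A.carrier) : Prop :=
  ∀ ω : S.symbols, A.op ω (fun _ => a) = a

/-- `B` is (the universe of) a subalgebra of `A`. -/
def Alg.IsSubuniverse {S : Signature} (A : Alg S) (B : Set A.carrier) : Prop :=
  ∀ ω (a : Fin (S.arity ω) → A.carrier), (∀ i, a i ∈ B) → A.op ω a ∈ B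

/-- The subalgebra of `A` on a nonempty subuniverse `B`. -/
def Alg.subAlg {S : Signature} (A : Alg S) (B : Set A.carrier)
    (h : A.IsSubuniverse B) (hne : B.Nonempty) : Alg S where
  carrier := B
  op ω a := ⟨A.op ω fun i => (a i : A.carrier), h ω _ fun i => (a i).2⟩
  nonempty := hne.to_subtype

/-- A congruence of `A`: an equivalence relation compatible with all operations. -/
structure Congruence {S : Signature} (A : Alg S) where
  rel : A.carrier → A.carrier → Prop
  iseqv : Equivalence rel
  compat : ∀ ω (a b : Fin (S.arity ω) → A.carrier),
    (∀ i, rel (a i) (b i)) → rel (A.op ω a) (A.op ω b)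

def Congruence.setoid {S : Signature} {A : Alg S} (θ : Congruence A) :
    Setoid A.carrier := ⟨θ.rel, θ.iseqv⟩

/-- The quotient algebra `A/θ`. -/
noncomputable def Alg.quot {S : Signature} (A : Alg S) (θ : Congruence A) : Alg S where
  carrier := Quotient θ.setoid
  op ω q := Quotient.mk θ.setoid (A.op ω fun i => (q i).out)
  nonempty := A.nonempty.map (Quotient.mk θ.setoid)

/-- Membership in the Mal'tsev product of the varieties axiomatized by `V` and `W`:
`A` has a congruence `θ` with `A/θ` in (the variety of) `W` such that every
`θ`-class which is a subalgebra of `A` is an algebra in (the variety of) `V`. -/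
def InMaltsev {S : Signature} (V W : Set (Ident S)) (A : Alg S) : Prop :=
  ∃ θ : Congruence A, (A.quot θ).Models W ∧
    ∀ a : A.carrier, ∀ h : A.IsSubuniverse {b | θ.rel a b},
      (A.subAlg {b | θ.rel a b} h ⟨a, θ.iseqv.refl a⟩).Models V

/-- A class of algebras is a variety iff it is axiomatized by some set of identities. -/
def IsVarietyClass {S : Signature} (K : Alg S → Prop) : Prop :=
  ∃ E : Set (Ident S), ∀ A : Alg S, K A ↔ A.Models E

def Term.subst {S : Signature} {X Y : Type} (f : X → Term S Y) :
    Term S X → Term S Y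
  | .var x => f x
  | .app ω ts => .app ω fun i => (ts i).subst f

/-- The set `σᵖ` of identities obtained from the identity `σ` by substituting for
its variables pairwise `W`-equivalent term idempotents of (the variety of) `W`. -/
def sigmaP {S : Signature} (W : Set (Ident S)) (σ : Ident S) : Set (Ident S) :=
  { e | ∃ r : ℕ → Term S ℕ,
      (∀ i j : ℕ, Conseq W (r i) (r j)) ∧
      (∀ ω : S.symbols, Conseq W (Term.app ω fun _ => r 0) (r 0)) ∧
      e = (σ.1.subst r, σ.2.subst r) }

/-- `Σᵖ = ⋃_{σ ∈ Σ} σᵖ`. -/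
def SigmaP {S : Signature} (W : Set (Ident S)) (Sg : Set (Ident S)) :
    Set (Ident S) :=
  ⋃ σ ∈ Sg, sigmaP W σ

/-- The term algebra over `X`. -/
def termAlg (S : Signature) (X : Type) [Nonempty X] : Alg S where
  carrier := Term S X
  op := Term.app
  nonempty := ⟨Term.var (Classical.arbitrary X)⟩

/-- The congruence of the term algebra identifying terms `u`, `v` such that the
identity `u = v` holds in the variety axiomatized by `E`. -/
def freeCong (S : Signature) (E : Set (Ident S)) (X : Type) [Nonempty X] :
    Congruence (termAlg S X) where
  rel u v := Conseq E u v
  iseqv := ⟨fun _ _ _ _ => rfl, fun h A hA env => (h A hA env).symm,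
            fun h1 h2 A hA env => (h1 A hA env).trans (h2 A hA env)⟩
  compat := fun ω a b h A hA env => by
    show Term.eval A env (.app ω a) = Term.eval A env (.app ω b)
    simp only [Term.eval]
    exact congrArg _ (funext fun i => h i A hA env)

/-- The free algebra over `X` of the variety axiomatized by `E`: the quotient of
the term algebra by semantic equivalence modulo `E`. -/
noncomputable def freeAlg (S : Signature) (E : Set (Ident S)) (X : Type)
    [Nonempty X] : Alg S := (termAlg S X).quot (freeCong S E X)

/-! The congruence `θ` on the free `Σᵖ`-algebra identifies the classes of terms `s`, `t` with
`W ⊨ s = t`; it is well defined because every identity of `Σᵖ` holds in `W`, and the quotient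
lies in `W` by construction. If a `θ`-class is a subalgebra, representatives `r₀, r₁, …` of its
elements are pairwise `W`-equivalent, and `W ⊨ ω(r₀, …, r₀) = r₀` since `ω(r₀, …, r₀)` stays in
the class. Substituting them into an identity of `Σ` therefore gives an identity of `Σᵖ`, once
the variables from `X` occurring in the `rₙ` are renamed into `ℕ`; so the class satisfies `Σ`,
i.e. it lies in `V`. -/

variable {S : Signature}

namespace Term

variable {X Y Z : Type}

theorem eval_subst (A : Alg S) (env : Y → A.carrier) (f : X → Term S Y) (t : Term S X) :
    (t.subst f).eval A env = t.eval A fun x => (f x).eval A env := by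
  induction t with
  | var x => rfl
  | app ω ts ih => exact congrArg _ (funext ih)

theorem subst_subst (f : X → Term S Y) (g : Y → Term S Z) (t : Term S X) :
    (t.subst f).subst g = t.subst fun x => (f x).subst g := by
  induction t with
  | var x => rfl
  | app ω ts ih => exact congrArg _ (funext ih)

theorem eval_termAlg [Nonempty X] (f : Y → Term S X) (t : Term S Y) :
    t.eval (termAlg S X) f = t.subst f := by
  induction t with
  | var x => rfl
  | app ω ts ih => exact congrArg _ (funext ih)

theorem eval_quot (A : Alg S) (θ : Congruence A) (env : X → (A.quot θ).carrier)
    (t : Term S X) :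
    t.eval (A.quot θ) env = Quotient.mk θ.setoid (t.eval A fun x => (env x).out) := by
  induction t with
  | var x => exact (Quotient.out_eq _).symm
  | app ω ts ih =>
    refine Quotient.sound (θ.compat ω _ _ fun i => ?_)
    show θ.rel ((ts i).eval (A.quot θ) env).out _
    rw [ih i]
    exact Quotient.mk_out (s := θ.setoid) _

theorem eval_subAlg (A : Alg S) (B : Set A.carrier) (h : A.IsSubuniverse B)
    (hne : B.Nonempty) (env : X → (A.subAlg B h hne).carrier) (t : Term S X) :
    (t.eval (A.subAlg B h hne) env).val = t.eval A fun x => (env x).val := by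
  induction t with
  | var x => rfl
  | app ω ts ih => exact congrArg (A.op ω) (funext ih)

def rename (f : X → Y) (t : Term S X) : Term S Y :=
  t.subst fun x => .var (f x)

theorem rename_rename (f : X → Y) (g : Y → Z) (t : Term S X) :
    (t.rename f).rename g = t.rename (g ∘ f) :=
  subst_subst _ _ t

/-- The variable `n` of the `i`-th term becomes `Nat.pair (encode i) n`. -/
theorem exists_eq_rename_nat_of_forall [Nonempty X] {ι : Type} [Encodable ι]
    (r : ι → Term S X) (h : ∀ i, ∃ (s : Term S ℕ) (g : ℕ → X), r i = s.rename g) :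
    ∃ (s : ι → Term S ℕ) (g : ℕ → X), ∀ i, r i = (s i).rename g := by
  choose s g hsg using h
  refine ⟨fun i => (s i).rename (Nat.pair (Encodable.encode i)),
    fun m => (Encodable.decode (α := ι) m.unpair.1).elim (Classical.arbitrary X)
      fun i => g i m.unpair.2, fun i => ?_⟩
  rw [rename_rename, hsg i]
  congr 1
  funext n
  simp [Nat.unpair_pair, Encodable.encodek]

theorem exists_eq_rename_nat [Nonempty X] (t : Term S X) :
    ∃ (s : Term S ℕ) (g : ℕ → X), t = s.rename g := by
  induction t with
  | var x => exact ⟨.var 0, fun _ => x, rfl⟩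
  | app ω ts ih =>
    obtain ⟨s, g, hsg⟩ := exists_eq_rename_nat_of_forall ts ih
    exact ⟨.app ω s, g, congrArg _ (funext hsg)⟩

theorem exists_rename_rename_eq [Nonempty X] (r : ℕ → Term S X) :
    ∃ (φ : X → ℕ) (g : ℕ → X), ∀ n, ((r n).rename φ).rename g = r n := by
  obtain ⟨s, g, hsg⟩ := exists_eq_rename_nat_of_forall r fun n => exists_eq_rename_nat (r n)
  refine ⟨Function.invFun g, g, fun n => ?_⟩
  rw [hsg, rename_rename, rename_rename]
  congr 1
  funext m
  exact Function.invFun_eq ⟨m, rfl⟩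

end Term

namespace Conseq

variable {E W : Set (Ident S)} {X Y : Type}

theorem refl (u : Term S X) : Conseq E u u := fun _ _ _ => rfl

theorem symm {u v : Term S X} (h : Conseq E u v) : Conseq E v u :=
  fun A hA env => (h A hA env).symm

theorem trans {u v w : Term S X} (h₁ : Conseq E u v) (h₂ : Conseq E v w) : Conseq E u w :=
  fun A hA env => (h₁ A hA env).trans (h₂ A hA env)

theorem of_mem {e : Ident S} (he : e ∈ E) : Conseq E e.1 e.2 := fun _ hA => hA e he

theorem app {ω : S.symbols} {a b : Fin (S.arity ω) → Term S X}
    (h : ∀ i, Conseq E (a i) (b i)) : Conseq E (.app ω a) (.app ω b) :=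
  fun A hA env => congrArg (A.op ω) (funext fun i => h i A hA env)

theorem subst {u v : Term S X} (h : Conseq E u v) (f : X → Term S Y) :
    Conseq E (u.subst f) (v.subst f) := fun A hA env => by
  rw [Term.eval_subst, Term.eval_subst]
  exact h A hA _

theorem of_conseq_axioms (hEW : ∀ e ∈ E, Conseq W e.1 e.2) {u v : Term S X}
    (h : Conseq E u v) : Conseq W u v :=
  fun A hA => h A fun e he => hEW e he A hA

end Conseq

/-- Pairwise `W`-equivalent term idempotents of `W`: the families that `sigmaP` substitutes. -/
structure IsIdemFamily (W : Set (Ident S)) {X : Type} (r : ℕ → Term S X) : Prop where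
  conseq : ∀ i j, Conseq W (r i) (r j)
  idem : ∀ ω, Conseq W (.app ω fun _ => r 0) (r 0)

namespace IsIdemFamily

variable {W Sg : Set (Ident S)} {X Y : Type} {r : ℕ → Term S X}

theorem subst (hr : IsIdemFamily W r) (f : X → Term S Y) :
    IsIdemFamily W fun n => (r n).subst f :=
  ⟨fun i j => (hr.conseq i j).subst f, fun ω => (hr.idem ω).subst f⟩

theorem conseq_subst (hr : IsIdemFamily W r) : ∀ t : Term S ℕ, Conseq W (t.subst r) (r 0)
  | .var n => hr.conseq n 0
  | .app ω ts => (Conseq.app fun i => hr.conseq_subst (ts i)).trans (hr.idem ω)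

theorem mem_SigmaP {σ : Ident S} (hσ : σ ∈ Sg) {r : ℕ → Term S ℕ} (hr : IsIdemFamily W r) :
    (σ.1.subst r, σ.2.subst r) ∈ SigmaP W Sg :=
  Set.mem_biUnion hσ ⟨r, hr.conseq, hr.idem, rfl⟩

theorem conseq_SigmaP_subst [Nonempty X] {σ : Ident S} (hσ : σ ∈ Sg) (hr : IsIdemFamily W r) :
    Conseq (SigmaP W Sg) (σ.1.subst r) (σ.2.subst r) := by
  obtain ⟨φ, g, hφg⟩ := Term.exists_rename_rename_eq r
  have hrename : ∀ t : Term S ℕ,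
      (t.subst fun n => (r n).rename φ).rename g = t.subst r := fun t => by
    rw [Term.rename, Term.subst_subst]
    exact congrArg t.subst (funext hφg)
  have h : Conseq (SigmaP W Sg) ((σ.1.subst fun n => (r n).rename φ).rename g)
      ((σ.2.subst fun n => (r n).rename φ).rename g) :=
    (Conseq.of_mem (mem_SigmaP hσ (hr.subst _))).subst _
  rwa [hrename, hrename] at h

end IsIdemFamily

theorem conseq_of_mem_SigmaP {W Sg : Set (Ident S)} (e : Ident S) (he : e ∈ SigmaP W Sg) :
    Conseq W e.1 e.2 := by
  obtain ⟨σ, -, r, hequiv, hidem, rfl⟩ := Set.mem_iUnion₂.mp he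
  have hr : IsIdemFamily W r := ⟨hequiv, hidem⟩
  exact (hr.conseq_subst σ.1).trans (hr.conseq_subst σ.2).symm

section FreeAlg

variable {E W : Set (Ident S)} {X Y : Type} [Nonempty X]

theorem freeAlg_eval (env : Y → (freeAlg S E X).carrier) (t : Term S Y) :
    t.eval (freeAlg S E X) env
      = Quotient.mk (freeCong S E X).setoid (t.subst fun y => (env y).out) :=
  (Term.eval_quot _ _ env t).trans (congrArg _ (Term.eval_termAlg _ t))

theorem conseq_out_mk (hEW : ∀ e ∈ E, Conseq W e.1 e.2) (t : Term S X) :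
    Conseq W (Quotient.mk (freeCong S E X).setoid t).out t :=
  (Quotient.mk_out (s := (freeCong S E X).setoid) t).of_conseq_axioms hEW

theorem conseq_out_mk_iff (hEW : ∀ e ∈ E, Conseq W e.1 e.2) {t t' : Term S X} :
    Conseq W (Quotient.mk (freeCong S E X).setoid t).out
        (Quotient.mk (freeCong S E X).setoid t').out ↔ Conseq W t t' :=
  ⟨fun h => (conseq_out_mk hEW t).symm.trans (h.trans (conseq_out_mk hEW t')),
    fun h => (conseq_out_mk hEW t).trans (h.trans (conseq_out_mk hEW t').symm)⟩

def freeAlgCong (hEW : ∀ e ∈ E, Conseq W e.1 e.2) : Congruence (freeAlg S E X) where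
  rel a b := Conseq W a.out b.out
  iseqv := ⟨fun _ => Conseq.refl _, Conseq.symm, Conseq.trans⟩
  compat _ _ _ hab := (conseq_out_mk_iff hEW).2 (Conseq.app hab)

theorem quot_freeAlgCong_models (hEW : ∀ e ∈ E, Conseq W e.1 e.2) :
    ((freeAlg S E X).quot (freeAlgCong hEW)).Models W := by
  rintro e he env
  rw [Term.eval_quot, Term.eval_quot, freeAlg_eval, freeAlg_eval]
  exact Quotient.sound ((conseq_out_mk_iff hEW).2 ((Conseq.of_mem he).subst _))

theorem isIdemFamily_out_of_isSubuniverse (hEW : ∀ e ∈ E, Conseq W e.1 e.2)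
    {a : (freeAlg S E X).carrier}
    (h : (freeAlg S E X).IsSubuniverse {b | (freeAlgCong hEW).rel a b})
    (b : ℕ → (freeAlg S E X).carrier) (hb : ∀ n, (freeAlgCong hEW).rel a (b n)) :
    IsIdemFamily W fun n => (b n).out where
  conseq i j := (hb i).symm.trans (hb j)
  idem ω := by
    have hop : Conseq W a.out ((freeAlg S E X).op ω fun _ => b 0).out := h ω _ fun _ => hb 0
    exact (conseq_out_mk hEW _).symm.trans (hop.symm.trans (hb 0))

theorem subAlg_freeAlgCong_models {Sg : Set (Ident S)} (a : (freeAlg S (SigmaP W Sg) X).carrier)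
    (h : (freeAlg S (SigmaP W Sg) X).IsSubuniverse
      {b | (freeAlgCong conseq_of_mem_SigmaP).rel a b}) :
    ((freeAlg S (SigmaP W Sg) X).subAlg _ h
      ⟨a, (freeAlgCong conseq_of_mem_SigmaP).iseqv.refl a⟩).Models Sg := by
  intro σ hσ env
  refine Subtype.ext <| (Term.eval_subAlg _ _ _ _ env σ.1).trans <|
    Eq.trans ?_ (Term.eval_subAlg _ _ _ _ env σ.2).symm
  rw [freeAlg_eval, freeAlg_eval]
  exact Quotient.sound <| IsIdemFamily.conseq_SigmaP_subst hσ <|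
    isIdemFamily_out_of_isSubuniverse conseq_of_mem_SigmaP h _ fun n => (env n).2

end FreeAlg

theorem stmt_5_general (S : Signature)
    (V W : Set (Ident S)) (Sg : Set (Ident S))
    (hbase : ∀ A : Alg S, A.Models V ↔ A.Models Sg)
    (X : Type) [Nonempty X] :
    InMaltsev V W (freeAlg S (SigmaP W Sg) X) :=
  ⟨freeAlgCong conseq_of_mem_SigmaP, quot_freeAlgCong_models _,
    fun a h => (hbase _).2 (subAlg_freeAlgCong_models a h)⟩

/-- Let `Σ` be an equational base of the variety `V` and let `U`
be the variety defined by `Σᵖ`. Then the free `U`-algebra over any set `X`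
belongs to the Mal'tsev product `V ∘ W`. -/
theorem stmt_5 (S : Signature) (h0 : ∀ ω : S.symbols, 0 < S.arity ω)
    (V W : Set (Ident S)) (Sg : Set (Ident S))
    (hbase : ∀ A : Alg S, A.Models V ↔ A.Models Sg)
    (X : Type) [Nonempty X] :
    InMaltsev V W (freeAlg S (SigmaP W Sg) X) :=
  stmt_5_general S V W Sg hbase X
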